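/- Let M be a von Neumann algebra without central summands of type I₁ and let L : M → M be an additive map satisfying L(A)B + AL(B) = 0 whenever AB = 0 (the case ξ = 0). Then L(I) ∈ Z(M) and the map φ(A) = L(A) − L(I)A is an additive derivation; equivalently, L(AB) = L(A)B + AL(B) − L(I)AB for all A, B ∈ M. -/

import Mathlib

/-!
Everything but one step is ring theory. Fix an idempotent `p` such that `t R p = 0` and
`t R (1 - p) = 0` each force `t = 0`; in a von Neumann algebra without central summand of
type I₁ a projection with core `0` and central carrier `1` is such a `p`, because the central
carrier of `E` is the projection onto the closed span of `M E H`.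

Applying the hypothesis to `(a q) (1 - q) = 0` and `(a (1 - q)) q = 0` gives
`L (a q) = L a q + a L q - a q L 1` for every idempotent `q`, so `L 1` commutes with all
idempotents, in particular with `p + p a (1 - p)` and `p + (1 - p) a p`, hence with the
off-diagonal Peirce corners; testing against `R (1 - p)` and `R p` it also commutes with the
diagonal ones, so it is central. For `φ = L - L 1 ·` the defect
`D a b = φ (a b) - φ a b - a φ b` is a Hochschild 2-cocycle, and by the formula above it vanishes
when `b` is idempotent, hence when `b` is off-diagonal. For `b = p b p` the cocycle identity
against `1 - p` gives `D a b (1 - p) = 0`, and against the elements `p c (1 - p)` gives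
`D a b p R (1 - p) = 0`; symmetrically for `(1 - p) b (1 - p)`, so `D = 0`.
-/

variable {H : Type*} [NormedAddCommGroup H] [InnerProductSpace ℂ H] [CompleteSpace H]

/-- `Z` lies in the center of the von Neumann algebra `M`. -/
def VonNeumannAlgebra.IsCentral (M : VonNeumannAlgebra H) (Z : H →L[ℂ] H) : Prop :=
  Z ∈ M ∧ ∀ A ∈ M, Z * A = A * Z

/-- `P` is a projection (self-adjoint idempotent) in `M`. -/
def VonNeumannAlgebra.IsProjection (M : VonNeumannAlgebra H) (P : H →L[ℂ] H) : Prop :=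
  P ∈ M ∧ P * P = P ∧ star P = P

/-- `Q` is a central projection of `M`. -/
def VonNeumannAlgebra.IsCentralProjection (M : VonNeumannAlgebra H) (Q : H →L[ℂ] H) : Prop :=
  M.IsCentral Q ∧ Q * Q = Q ∧ star Q = Q

/-- The core of the projection `P` (the largest central projection below `P`) is zero,
i.e. the only central projection `Q` with `Q ≤ P` (equivalently `Q * P = Q`) is `0`. -/
def VonNeumannAlgebra.CoreZero (M : VonNeumannAlgebra H) (P : H →L[ℂ] H) : Prop :=
  ∀ Q : H →L[ℂ] H, M.IsCentralProjection Q → Q * P = Q → Q = 0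

/-- The central carrier of the projection `P` (the smallest central projection above `P`)
is `1`, i.e. the only central projection `Q` with `Q * P = P` is `1`. -/
def VonNeumannAlgebra.CarrierOne (M : VonNeumannAlgebra H) (P : H →L[ℂ] H) : Prop :=
  ∀ Q : H →L[ℂ] H, M.IsCentralProjection Q → Q * P = P → Q = 1

/-- `M` has no central summand of type I₁: equivalently, `M` contains a projection
with core `0` and central carrier `1`. -/
def VonNeumannAlgebra.NoTypeI1 (M : VonNeumannAlgebra H) : Prop :=
  ∃ P : H →L[ℂ] H, M.IsProjection P ∧ M.CoreZero P ∧ M.CarrierOne P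

section Ring

variable {R : Type*} [Ring R]

/-- For a projection `e` of a von Neumann algebra this says that the central carrier of `e`
is `1`. -/
def HasTrivialLeftAnnihilator (e : R) : Prop :=
  ∀ t : R, (∀ d, t * d * e = 0) → t = 0

lemma IsIdempotentElem.add_mul_mul_one_sub {q : R} (hq : IsIdempotentElem q) (e : R) :
    IsIdempotentElem (q + q * e * (1 - q)) := by
  have h₁ : q * e * (1 - q) * q = 0 := by rw [mul_assoc _ (1 - q), hq.one_sub_mul_self, mul_zero]
  have h₂ : q * (q * e * (1 - q)) = q * e * (1 - q) := by rw [← mul_assoc, ← mul_assoc, hq.eq]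
  calc (q + q * e * (1 - q)) * (q + q * e * (1 - q))
      = q * q + q * (q * e * (1 - q)) + q * e * (1 - q) * q
        + q * e * (1 - q) * q * (e * (1 - q)) := by noncomm_ring
    _ = q + q * e * (1 - q) := by rw [h₁, h₂, hq.eq]; simp

namespace AddMonoidHom

variable {A : Type*} [AddCommGroup A] (f : R →+ A)

lemma map_mul_mul_one_sub_eq_zero (hf : ∀ e, IsIdempotentElem e → f e = 0)
    {q : R} (hq : IsIdempotentElem q) (e : R) : f (q * e * (1 - q)) = 0 := by
  simpa [hf q hq, hf _ (hq.add_mul_mul_one_sub e)] using (map_add f q (q * e * (1 - q))).symm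

lemma eq_zero_of_map_corner_eq_zero (hf : ∀ e, IsIdempotentElem e → f e = 0)
    {p : R} (hp : IsIdempotentElem p) (h₁ : ∀ y, f (p * y * p) = 0)
    (h₂ : ∀ y, f ((1 - p) * y * (1 - p)) = 0) : f = 0 := by
  ext a
  have h₃ := f.map_mul_mul_one_sub_eq_zero hf hp.one_sub a
  rw [sub_sub_cancel] at h₃
  have hpeirce :
      a = p * a * p + p * a * (1 - p) + ((1 - p) * a * p + (1 - p) * a * (1 - p)) := by
    noncomm_ring
  rw [hpeirce, map_add, map_add, map_add, h₁, h₂, h₃, f.map_mul_mul_one_sub_eq_zero hf hp]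
  simp

end AddMonoidHom

lemma commute_mul_mul_of_forall_commute_isIdempotentElem {q z : R} (hq : IsIdempotentElem q)
    (hq' : HasTrivialLeftAnnihilator (1 - q)) (hz : ∀ e, IsIdempotentElem e → Commute z e)
    (y : R) : Commute z (q * y * q) := by
  have hoff (e : R) : z * (q * e * (1 - q)) = q * e * (1 - q) * z :=
    sub_eq_zero.mp <| (AddMonoidHom.mulLeft z - AddMonoidHom.mulRight z).map_mul_mul_one_sub_eq_zero
      (fun e he => sub_eq_zero.mpr (hz e he).eq) hq e
  refine sub_eq_zero.mp (hq' _ fun d => ?_)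
  calc (z * (q * y * q) - q * y * q * z) * d * (1 - q)
      = (z * (q * (y * q * d) * (1 - q)) - q * (y * q * d) * (1 - q) * z)
        - q * y * (z * (q * d * (1 - q)) - q * d * (1 - q) * z)
        + q * y * (z * q - q * z) * d * (1 - q) := by noncomm_ring
    _ = 0 := by rw [hoff, hoff, (hz q hq).eq]; simp

theorem mem_center_of_forall_commute_isIdempotentElem {p z : R} (hp : IsIdempotentElem p)
    (hp₁ : HasTrivialLeftAnnihilator p) (hp₂ : HasTrivialLeftAnnihilator (1 - p))
    (hz : ∀ e, IsIdempotentElem e → Commute z e) : z ∈ Subring.center R := by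
  have hp₁' : HasTrivialLeftAnnihilator (1 - (1 - p)) := by rwa [sub_sub_cancel]
  have h := (AddMonoidHom.mulLeft z - AddMonoidHom.mulRight z).eq_zero_of_map_corner_eq_zero
    (fun e he => sub_eq_zero.mpr (hz e he).eq) hp
    (fun y => sub_eq_zero.mpr (commute_mul_mul_of_forall_commute_isIdempotentElem hp hp₂ hz y).eq)
    (fun y => sub_eq_zero.mpr
      (commute_mul_mul_of_forall_commute_isIdempotentElem hp.one_sub hp₁' hz y).eq)
  exact Subring.mem_center_iff.mpr fun a => (sub_eq_zero.mp congr($h a)).symm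

namespace AddMonoidHom

def derivationDefect (φ : R →+ R) (a : R) : R →+ R :=
  φ.comp (mulLeft a) - mulLeft (φ a) - (mulLeft a).comp φ

variable (φ : R →+ R)

@[simp]
lemma derivationDefect_apply (a b : R) :
    φ.derivationDefect a b = φ (a * b) - φ a * b - a * φ b := rfl

lemma derivationDefect_cocycle (a b c : R) :
    a * φ.derivationDefect b c - φ.derivationDefect (a * b) c + φ.derivationDefect a (b * c)
      - φ.derivationDefect a b * c = 0 := by
  simp only [derivationDefect_apply]
  noncomm_ring

lemma derivationDefect_mul_mul_eq_zero
    (hφ : ∀ a e, IsIdempotentElem e → φ.derivationDefect a e = 0) {q : R}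
    (hq : IsIdempotentElem q) (hq' : HasTrivialLeftAnnihilator (1 - q)) (a y : R) :
    φ.derivationDefect a (q * y * q) = 0 := by
  set x := q * y * q
  have hoff (b e : R) : φ.derivationDefect b (q * e * (1 - q)) = 0 :=
    (φ.derivationDefect b).map_mul_mul_one_sub_eq_zero (hφ b) hq e
  have hx : x * (1 - q) = 0 := by rw [mul_assoc, hq.mul_one_sub_self, mul_zero]
  have h₁ : φ.derivationDefect a x * (1 - q) = 0 := by
    simpa [hφ _ _ hq.one_sub, hx] using φ.derivationDefect_cocycle a x (1 - q)
  have h₂ : φ.derivationDefect a x * q = 0 := hq' _ fun d => by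
    have hxd : x * (q * d * (1 - q)) = q * (y * q * q * d) * (1 - q) := by
      simp only [x]; noncomm_ring
    have h := φ.derivationDefect_cocycle a x (q * d * (1 - q))
    rw [hoff, hoff, hxd, hoff] at h
    simpa [mul_assoc] using h
  calc φ.derivationDefect a x
      = φ.derivationDefect a x * q + φ.derivationDefect a x * (1 - q) := by noncomm_ring
    _ = 0 := by rw [h₁, h₂, add_zero]

theorem derivationDefect_eq_zero
    (hφ : ∀ a e, IsIdempotentElem e → φ.derivationDefect a e = 0) {p : R}
    (hp : IsIdempotentElem p) (hp₁ : HasTrivialLeftAnnihilator p)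
    (hp₂ : HasTrivialLeftAnnihilator (1 - p)) (a : R) : φ.derivationDefect a = 0 := by
  have hp₁' : HasTrivialLeftAnnihilator (1 - (1 - p)) := by rwa [sub_sub_cancel]
  exact (φ.derivationDefect a).eq_zero_of_map_corner_eq_zero (hφ a) hp
    (φ.derivationDefect_mul_mul_eq_zero hφ hp hp₂ a)
    (φ.derivationDefect_mul_mul_eq_zero hφ hp.one_sub hp₁' a)

variable (L : R →+ R)

lemma map_mul_of_isIdempotentElem (hL : ∀ a b, a * b = 0 → L a * b + a * L b = 0) {e : R}
    (he : IsIdempotentElem e) (a : R) : L (a * e) = L a * e + a * L e - a * e * L 1 := by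
  have h₁ := hL (a * e) (1 - e) (by rw [mul_assoc, he.mul_one_sub_self, mul_zero])
  have h₂ := hL (a * (1 - e)) e (by rw [mul_assoc, he.one_sub_mul_self, mul_zero])
  rw [map_sub] at h₁
  rw [mul_sub, mul_one, map_sub] at h₂
  refine sub_eq_zero.mp ?_
  calc L (a * e) - (L a * e + a * L e - a * e * L 1)
      = (L (a * e) * (1 - e) + a * e * (L 1 - L e))
        - ((L a - L (a * e)) * e + (a - a * e) * L e) := by noncomm_ring
    _ = 0 := by rw [h₁, h₂, sub_zero]

lemma commute_map_one_of_isIdempotentElem (hL : ∀ a b, a * b = 0 → L a * b + a * L b = 0)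
    {e : R} (he : IsIdempotentElem e) : Commute (L 1) e := by
  have h := L.map_mul_of_isIdempotentElem hL he 1
  simp only [one_mul] at h
  refine sub_eq_zero.mp ?_
  calc L 1 * e - e * L 1 = (L 1 * e + L e - e * L 1) - L e := by abel
    _ = 0 := by rw [← h, sub_self]

theorem map_one_mem_center (hL : ∀ a b, a * b = 0 → L a * b + a * L b = 0) {p : R}
    (hp : IsIdempotentElem p) (hp₁ : HasTrivialLeftAnnihilator p)
    (hp₂ : HasTrivialLeftAnnihilator (1 - p)) : L 1 ∈ Subring.center R :=
  mem_center_of_forall_commute_isIdempotentElem hp hp₁ hp₂ fun _ he =>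
    L.commute_map_one_of_isIdempotentElem hL he

theorem map_mul_sub_map_one_mul (hL : ∀ a b, a * b = 0 → L a * b + a * L b = 0) {p : R}
    (hp : IsIdempotentElem p) (hp₁ : HasTrivialLeftAnnihilator p)
    (hp₂ : HasTrivialLeftAnnihilator (1 - p)) (a b : R) :
    L (a * b) - L 1 * (a * b) = (L a - L 1 * a) * b + a * (L b - L 1 * b) := by
  set φ := L - mulLeft (L 1)
  have hφ (a e : R) (he : IsIdempotentElem e) : φ.derivationDefect a e = 0 := by
    simp only [derivationDefect_apply, φ, sub_apply, coe_mulLeft,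
      L.map_mul_of_isIdempotentElem hL he]
    calc _ = a * (L 1 * e - e * L 1) := by noncomm_ring
      _ = 0 := by rw [(L.commute_map_one_of_isIdempotentElem hL he).eq, sub_self, mul_zero]
  have h := congr($(φ.derivationDefect_eq_zero hφ hp hp₁ hp₂ a) b)
  simp only [derivationDefect_apply, φ, sub_apply, coe_mulLeft, zero_apply] at h
  rwa [sub_sub, sub_eq_zero] at h

end AddMonoidHom

end Ring

lemma Submodule.span_mem_invtSubmodule {R M : Type*} [Semiring R] [AddCommMonoid M] [Module R M]
    {f : Module.End R M} {s : Set M} (h : Set.MapsTo f s s) :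
    Submodule.span R s ∈ f.invtSubmodule := by
  rw [Module.End.mem_invtSubmodule, Submodule.span_le]
  exact fun x hx => Submodule.subset_span (h hx)

namespace VonNeumannAlgebra

variable {M : VonNeumannAlgebra H}

lemma IsCentralProjection.one_sub {Q : H →L[ℂ] H} (hQ : M.IsCentralProjection Q) :
    M.IsCentralProjection (1 - Q) := by
  obtain ⟨⟨hQM, hQc⟩, hQi, hQs⟩ := hQ
  refine ⟨⟨sub_mem (one_mem M) hQM, fun A hA => ?_⟩, IsIdempotentElem.one_sub hQi, ?_⟩
  · rw [sub_mul, mul_sub, one_mul, mul_one, hQc A hA]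
  · rw [star_sub, star_one, hQs]

lemma CoreZero.carrierOne_one_sub {P : H →L[ℂ] H} (hP : M.CoreZero P) : M.CarrierOne (1 - P) :=
  fun Q hQ hQP => by
    have h := hP (1 - Q) hQ.one_sub <| by
      calc (1 - Q) * P = 1 - Q - (1 - P - Q * (1 - P)) := by noncomm_ring
        _ = 1 - Q := by rw [hQP, sub_self, sub_zero]
    exact (sub_eq_zero.mp h).symm

variable (M) in
noncomputable def centralCarrier (E : H →L[ℂ] H) : H →L[ℂ] H :=
  (Submodule.span ℂ {y | ∃ A ∈ M, ∃ x, A (E x) = y}).topologicalClosure.starProjection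

lemma range_centralCarrier_mem_invtSubmodule {E T : H →L[ℂ] H}
    (hT : ∀ A ∈ M, ∃ B ∈ M, ∀ x, ∃ x', T (A (E x)) = B (E x')) :
    (M.centralCarrier E).range ∈ Module.End.invtSubmodule (T : H →ₗ[ℂ] H) := by
  rw [centralCarrier, Submodule.range_starProjection]
  refine Submodule.topologicalClosure_mem_invtSubmodule (Submodule.span_mem_invtSubmodule ?_)
  rintro _ ⟨A, hA, x, rfl⟩
  obtain ⟨B, hB, hx⟩ := hT A hA
  obtain ⟨x', hx'⟩ := hx x
  exact ⟨B, hB, x', hx'.symm⟩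

lemma isCentralProjection_centralCarrier {E : H →L[ℂ] H} (hE : E ∈ M) :
    M.IsCentralProjection (M.centralCarrier E) := by
  have hQ : IsStarProjection (M.centralCarrier E) := isStarProjection_starProjection
  have hQM : M.centralCarrier E ∈ M := (IsStarProjection.mem_iff hQ M).mpr fun T hT =>
    range_centralCarrier_mem_invtSubmodule fun A hA => ⟨A, hA, fun x => ⟨T x, by
      have hTA := mem_commutant_iff.mp hT A hA
      have hTE := mem_commutant_iff.mp hT E hE
      change (T * A * E) x = (A * E * T) x
      rw [← hTA, mul_assoc, ← hTE, ← mul_assoc]⟩⟩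
  have hQM' : M.centralCarrier E ∈ M.commutant :=
    (IsStarProjection.mem_iff hQ M.commutant).mpr fun T hT =>
      range_centralCarrier_mem_invtSubmodule fun A hA =>
        ⟨T * A, mul_mem (M.commutant_commutant ▸ hT) hA, fun x => ⟨x, rfl⟩⟩
  exact ⟨⟨hQM, fun A hA => (mem_commutant_iff.mp hQM' A hA).symm⟩, hQ.isIdempotentElem,
    hQ.isSelfAdjoint⟩

lemma centralCarrier_mul_self (E : H →L[ℂ] H) : M.centralCarrier E * E = E := by
  ext x
  refine Submodule.starProjection_eq_self_iff.mpr (Submodule.le_topologicalClosure _ ?_)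
  exact Submodule.subset_span ⟨1, one_mem M, x, rfl⟩

lemma mul_centralCarrier_eq_zero {E T : H →L[ℂ] H} (hT : ∀ A ∈ M, T * A * E = 0) :
    T * M.centralCarrier E = 0 := by
  have hker : (Submodule.span ℂ {y | ∃ A ∈ M, ∃ x, A (E x) = y}).topologicalClosure ≤
      LinearMap.ker (T : H →ₗ[ℂ] H) := by
    refine Submodule.topologicalClosure_minimal _ (Submodule.span_le.mpr ?_) T.isClosed_ker
    rintro _ ⟨A, hA, x, rfl⟩
    exact congr($(hT A hA) x)
  ext x
  exact hker (Submodule.starProjection_apply_mem _ x)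

lemma CarrierOne.eq_zero_of_forall_mul_mul_eq_zero {E T : H →L[ℂ] H} (hE : E ∈ M)
    (hE₁ : M.CarrierOne E) (hT : ∀ A ∈ M, T * A * E = 0) : T = 0 := by
  simpa [hE₁ _ (isCentralProjection_centralCarrier hE) (centralCarrier_mul_self E)] using
    mul_centralCarrier_eq_zero hT

lemma CarrierOne.hasTrivialLeftAnnihilator {E : H →L[ℂ] H} (hE : E ∈ M)
    (hE₁ : M.CarrierOne E) :
    HasTrivialLeftAnnihilator (⟨E, hE⟩ : M) := fun _ ht => Subtype.ext <|
  hE₁.eq_zero_of_forall_mul_mul_eq_zero hE fun A hA => congr(Subtype.val $(ht ⟨A, hA⟩))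

end VonNeumannAlgebra

theorem zero_case_generalized_derivation (M : VonNeumannAlgebra H) (hM : M.NoTypeI1)
    (L : (H →L[ℂ] H) → (H →L[ℂ] H))
    (hmaps : ∀ A ∈ M, L A ∈ M)
    (hadd : ∀ A ∈ M, ∀ B ∈ M, L (A + B) = L A + L B)
    (hcond : ∀ A ∈ M, ∀ B ∈ M, A * B = 0 → L A * B + A * L B = 0) :
    M.IsCentral (L 1) ∧
    (∀ A ∈ M, ∀ B ∈ M,
      L (A * B) - L 1 * (A * B) = (L A - L 1 * A) * B + A * (L B - L 1 * B)) ∧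
    (∀ A ∈ M, ∀ B ∈ M, L (A * B) = L A * B + A * L B - L 1 * (A * B)) := by
  obtain ⟨P, ⟨hPM, hP, -⟩, hP₀, hP₁⟩ := hM
  let L' : M →+ M :=
    AddMonoidHom.mk' (fun A => ⟨L A, hmaps A A.2⟩) fun A B => Subtype.ext (hadd A A.2 B B.2)
  have hL' (A B : M) (h : A * B = 0) : L' A * B + A * L' B = 0 :=
    Subtype.ext (hcond A A.2 B B.2 congr(Subtype.val $h))
  have hp : IsIdempotentElem (⟨P, hPM⟩ : M) := Subtype.ext hP
  have hp₁ := hP₁.hasTrivialLeftAnnihilator hPM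
  have hp₂ := hP₀.carrierOne_one_sub.hasTrivialLeftAnnihilator (sub_mem (one_mem M) hPM)
  have hcentral (A : H →L[ℂ] H) (hA : A ∈ M) : L 1 * A = A * L 1 := by
    have h := Subring.mem_center_iff.mp (L'.map_one_mem_center hL' hp hp₁ hp₂) ⟨A, hA⟩
    exact congr(Subtype.val $h).symm
  have hderiv (A : H →L[ℂ] H) (hA : A ∈ M) (B : H →L[ℂ] H) (hB : B ∈ M) :
      L (A * B) - L 1 * (A * B) = (L A - L 1 * A) * B + A * (L B - L 1 * B) :=
    congr(Subtype.val $(L'.map_mul_sub_map_one_mul hL' hp hp₁ hp₂ ⟨A, hA⟩ ⟨B, hB⟩))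
  refine ⟨⟨hmaps 1 (one_mem M), hcentral⟩, hderiv, fun A hA B hB => ?_⟩
  calc L (A * B) = (L (A * B) - L 1 * (A * B)) + L 1 * (A * B) := (sub_add_cancel _ _).symm
    _ = L A * B + A * L B - L 1 * (A * B) + (L 1 * A - A * L 1) * B := by
      rw [hderiv A hA B hB]; noncomm_ring
    _ = L A * B + A * L B - L 1 * (A * B) := by rw [hcentral A hA, sub_self, zero_mul, add_zero]
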